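/- arXiv:2312.01538 — 3 statements merged into one kernel-verified Lean document; each statement's English description precedes it below -/
import Mathlib

section
/- Let K ≥ 0 and d ≥ 1. There exist a diagonal matrix Λ ∈ ℂ^{d_s × d_s} with d_s = (K+1)d and a matrix W ∈ ℂ^{d_s × d} such that the map R sending an input sequence (x_0, ..., x_K) ∈ (ℝ^d)^{K+1} to s_K = ∑_{k=0}^K Λ^k W x_k is a bijection from (ℝ^d)^{K+1} onto its image, and indeed a linear isomorphism onto ℝ^{(K+1)d} when Λ and W are chosen real. -/
/-- For `d_s = (K+1)d`, there exist a real diagonal transition matrix `Λ` and input matrix `W`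
such that `(x_0, ..., x_K) ↦ ∑_{k=0}^K Λ^k W x_k` is a bijection (a linear isomorphism)
from `(ℝ^d)^{K+1}` onto `ℝ^{(K+1)d}`. -/
theorem exists_bijective_linear_rnn (K d : ℕ) (hd : 1 ≤ d) :
    ∃ (lam : Fin ((K + 1) * d) → ℝ) (W : Matrix (Fin ((K + 1) * d)) (Fin d) ℝ),
      Function.Bijective
        (fun x : Fin (K + 1) → Fin d → ℝ =>
          ∑ k : Fin (K + 1), ((Matrix.diagonal lam) ^ (k : ℕ)).mulVec (W.mulVec (x k))) := by
  -- index decomposition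
  set e : Fin (K + 1) × Fin d ≃ Fin ((K + 1) * d) := finProdFinEquiv
  refine ⟨fun s => ((e.symm s).1 : ℝ),
    Matrix.of (fun s i => if (e.symm s).2 = i then (1 : ℝ) else 0), ?_⟩
  set lam : Fin ((K + 1) * d) → ℝ := fun s => ((e.symm s).1 : ℝ)
  set W : Matrix (Fin ((K + 1) * d)) (Fin d) ℝ :=
    Matrix.of (fun s i => if (e.symm s).2 = i then (1 : ℝ) else 0)
  -- explicit formula for the map
  have key : ∀ (x : Fin (K + 1) → Fin d → ℝ) (s : Fin ((K + 1) * d)),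
      (∑ k : Fin (K + 1), ((Matrix.diagonal lam) ^ (k : ℕ)).mulVec (W.mulVec (x k))) s
        = ∑ k : Fin (K + 1), (((e.symm s).1 : ℝ)) ^ (k : ℕ) * x k (e.symm s).2 := by
    intro x s
    have hW : ∀ k, W.mulVec (x k) s = x k (e.symm s).2 := by
      intro k
      simp [Matrix.mulVec, dotProduct, W, ite_mul, Finset.sum_ite_eq]
    simp only [Finset.sum_apply]
    refine Finset.sum_congr rfl fun k _ => ?_
    rw [Matrix.diagonal_pow, Matrix.mulVec_diagonal, hW]
    simp [lam]
  -- the map as a linear map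
  let F : (Fin (K + 1) → Fin d → ℝ) →ₗ[ℝ] (Fin ((K + 1) * d) → ℝ) :=
    { toFun := fun x =>
        ∑ k : Fin (K + 1), ((Matrix.diagonal lam) ^ (k : ℕ)).mulVec (W.mulVec (x k))
      map_add' := by
        intro x y
        simp [Matrix.mulVec_add, Finset.sum_add_distrib]
      map_smul' := by
        intro c x
        simp [Matrix.mulVec_smul, Finset.smul_sum] }
  -- injectivity
  have hu : Function.Injective (fun j : Fin (K + 1) => (j : ℝ)) := by
    intro a b hab
    exact Fin.ext (Nat.cast_injective hab)
  have hVdet : (Matrix.vandermonde (fun j : Fin (K + 1) => (j : ℝ))).det ≠ 0 :=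
    Matrix.det_vandermonde_ne_zero_iff.mpr hu
  have hVinj : Function.Injective
      ((Matrix.vandermonde (fun j : Fin (K + 1) => (j : ℝ))).mulVec) :=
    Matrix.mulVec_injective_iff_isUnit.mpr (Matrix.isUnit_iff_isUnit_det _ |>.mpr
      (isUnit_iff_ne_zero.mpr hVdet))
  have hFinj : Function.Injective F := by
    rw [← LinearMap.ker_eq_bot, LinearMap.ker_eq_bot']
    intro x hx
    funext k i
    have hs : ∀ s, (F x) s = 0 := fun s => by rw [hx]; rfl
    -- for fixed i, the Vandermonde system
    have hv : (Matrix.vandermonde (fun j : Fin (K + 1) => (j : ℝ))).mulVec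
        (fun k => x k i) = 0 := by
      funext j
      have := hs (e (j, i))
      have h2 : (F x) (e (j, i)) =
          ∑ k : Fin (K + 1), ((j : ℝ)) ^ (k : ℕ) * x k i := by
        refine (key x (e (j, i))).trans ?_
        simp
      rw [h2] at this
      simpa [Matrix.mulVec, dotProduct, Matrix.vandermonde] using this
    have hx0 : (fun k => x k i) = 0 := hVinj (hv.trans (Matrix.mulVec_zero _).symm)
    simpa using congrFun hx0 k
  -- dimension count gives surjectivity
  have hrank : Module.finrank ℝ (Fin (K + 1) → Fin d → ℝ)
      = Module.finrank ℝ (Fin ((K + 1) * d) → ℝ) := by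
    simp [Module.finrank_pi_fintype, Module.finrank_pi]
  have hFbij : Function.Bijective F :=
    ⟨hFinj, (LinearMap.injective_iff_surjective_of_finrank_eq_finrank hrank).mp hFinj⟩
  exact hFbij
end

section
/- Let X ⊂ ℝ be a countable set and let K ≥ 1. There exists λ ∈ ℝ such that the one-dimensional linear RNN map R: X^{K+1} → ℝ given by R(x_0, ..., x_K) = ∑_{k=0}^K λ^k x_k is injective. -/
open Polynomial

/-- For a countable set `X ⊂ ℝ` and `K ≥ 1`, there exists `λ ∈ ℝ` such that the scalar linear
RNN map `(x_0, ..., x_K) ↦ ∑_{k=0}^K λ^k x_k` is injective on sequences with entries in `X`. -/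
theorem exists_injective_scalar_rnn (K : ℕ) (hK : 1 ≤ K) (X : Set ℝ) (hX : X.Countable) :
    ∃ l : ℝ, Set.InjOn (fun x : Fin (K + 1) → ℝ => ∑ k : Fin (K + 1), l ^ (k : ℕ) * x k)
      {x | ∀ k, x k ∈ X} := by
  set S : Set (Fin (K + 1) → ℝ) := {x | ∀ k, x k ∈ X} with hS
  have hScount : S.Countable := by
    exact Set.countable_pi (fun _ : Fin (K + 1) => hX)
  set P : (Fin (K + 1) → ℝ) → (Fin (K + 1) → ℝ) → ℝ[X] :=
    fun x y => ∑ k : Fin (K + 1), C (x k - y k) * Polynomial.X ^ (k : ℕ) with hP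
  have hcoeff : ∀ x y (k : Fin (K + 1)), (P x y).coeff (k : ℕ) = x k - y k := by
    intro x y k
    rw [hP]
    simp only [Polynomial.finset_sum_coeff, Polynomial.coeff_C_mul, Polynomial.coeff_X_pow]
    rw [Finset.sum_eq_single k]
    · simp
    · intro j _ hj
      have : (k : ℕ) ≠ (j : ℕ) := by simp [Fin.val_eq_val]; exact (Ne.symm hj)
      simp [this]
    · simp
  have hPne : ∀ x ∈ S, ∀ y ∈ S, x ≠ y → P x y ≠ 0 := by
    intro x _ y _ hxy h0
    apply hxy
    funext k
    have := hcoeff x y k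
    rw [h0] at this
    simp at this
    linarith
  set B : Set ℝ := ⋃ p ∈ (S ×ˢ S) ∩ {p | p.1 ≠ p.2}, {l | (P p.1 p.2).IsRoot l} with hB
  have hBcount : B.Countable := by
    apply Set.Countable.biUnion
    · exact ((hScount.prod hScount).mono Set.inter_subset_left)
    · rintro ⟨x, y⟩ ⟨⟨hx, hy⟩, hne⟩
      exact ((Polynomial.finite_setOf_isRoot (hPne x hx y hy hne))).countable
  have : B ≠ Set.univ := by
    intro h
    exact Set.not_countable_univ (h ▸ hBcount)
  obtain ⟨l, hl⟩ : ∃ l : ℝ, l ∉ B := by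
    by_contra h
    push_neg at h
    exact this (Set.eq_univ_of_forall h)
  refine ⟨l, ?_⟩
  intro x hx y hy heq
  by_contra hne
  apply hl
  rw [hB]
  refine Set.mem_biUnion (show ((x, y) : _) ∈ (S ×ˢ S) ∩ {p | p.1 ≠ p.2} from ⟨⟨hx, hy⟩, hne⟩) ?_
  show (P x y).IsRoot l
  rw [Polynomial.IsRoot, hP]
  simp only [Polynomial.eval_finset_sum, Polynomial.eval_mul, Polynomial.eval_C,
    Polynomial.eval_pow, Polynomial.eval_X]
  have : ∑ k : Fin (K + 1), (x k - y k) * l ^ (k : ℕ)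
      = (∑ k : Fin (K + 1), l ^ (k : ℕ) * x k) - ∑ k : Fin (K + 1), l ^ (k : ℕ) * y k := by
    rw [← Finset.sum_sub_distrib]; congr 1; funext k; ring
  rw [this]
  simp only at heq
  rw [heq, sub_self]
end

section
/- Let X ⊂ ℝ^d be a countable set and K ≥ 1. There exist a real diagonal matrix Λ ∈ ℝ^{d×d} and W = I_d ∈ ℝ^{d×d} such that the map R: X^{K+1} → ℝ^d, R(x_0, ..., x_K) = ∑_{k=0}^K Λ^k x_k, is injective. -/
/-- For a countable set `X ⊂ ℝ^d` and `K ≥ 1`, there exists a real diagonal matrix `Λ`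
(with `W = I`) such that `(x_0, ..., x_K) ↦ ∑_{k=0}^K Λ^k x_k` is injective on sequences
with entries in `X`. -/
theorem exists_injective_diagonal_rnn (K d : ℕ) (hK : 1 ≤ K) (X : Set (Fin d → ℝ))
    (hX : X.Countable) :
    ∃ lam : Fin d → ℝ,
      Set.InjOn
        (fun x : Fin (K + 1) → Fin d → ℝ =>
          ∑ k : Fin (K + 1), ((Matrix.diagonal lam) ^ (k : ℕ)).mulVec
            ((1 : Matrix (Fin d) (Fin d) ℝ).mulVec (x k)))
        {x | ∀ k, x k ∈ X} := by
  classical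
  set Y : Set ℝ := ⋃ v ∈ X, Set.range v with hY
  have hYc : Y.Countable := hX.biUnion fun v _ => Set.countable_range v
  set D : Set ℝ := Set.image2 (· - ·) Y Y with hD
  have hDc : D.Countable := hYc.image2 hYc _
  set Cs : Set (Fin (K + 1) → ℝ) := {c | (∀ k, c k ∈ D) ∧ c ≠ 0} with hCs
  have hCc : Cs.Countable := by
    have hsub : Cs ⊆ Set.pi Set.univ (fun _ => D) := fun c hc k _ => hc.1 k
    exact (Set.countable_univ_pi fun _ => hDc).mono hsub
  set B : Set ℝ := ⋃ c ∈ Cs, {t : ℝ | ∑ k : Fin (K + 1), c k * t ^ (k : ℕ) = 0} with hB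
  have hBc : B.Countable := by
    refine hCc.biUnion fun c hc => ?_
    have hp : (∑ k : Fin (K + 1), Polynomial.C (c k) * Polynomial.X ^ (k : ℕ)) ≠ 0 := by
      intro h
      apply hc.2
      funext k
      have hco := congrArg (fun p => Polynomial.coeff p (k : ℕ)) h
      simp only [Polynomial.finset_sum_coeff, Polynomial.coeff_C_mul, Polynomial.coeff_X_pow,
        Polynomial.coeff_zero, mul_ite, mul_one, mul_zero, Fin.val_eq_val] at hco
      rw [Finset.sum_ite_eq Finset.univ k c] at hco
      simpa using hco
    have hfin : {t : ℝ | ∑ k : Fin (K + 1), c k * t ^ (k : ℕ) = 0}.Finite := by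
      have heq : {t : ℝ | ∑ k : Fin (K + 1), c k * t ^ (k : ℕ) = 0}
          = {t : ℝ | Polynomial.IsRoot
              (∑ k : Fin (K + 1), Polynomial.C (c k) * Polynomial.X ^ (k : ℕ)) t} := by
        ext t
        simp [Polynomial.IsRoot, Polynomial.eval_finset_sum]
      rw [heq]
      exact Polynomial.finite_setOf_isRoot hp
    exact hfin.countable
  have hex : ∃ t : ℝ, t ∉ B := by
    by_contra h
    push_neg at h
    have huniv : (Set.univ : Set ℝ) ⊆ B := fun t _ => h t
    exact Cardinal.not_countable_real (hBc.mono huniv)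
  obtain ⟨t, ht⟩ := hex
  refine ⟨fun _ => t, ?_⟩
  intro x hx y hy hxy
  simp only at hxy
  have hxy' : ∀ i, ∑ k : Fin (K + 1), t ^ (k : ℕ) * x k i
      = ∑ k : Fin (K + 1), t ^ (k : ℕ) * y k i := by
    intro i
    have h := congrFun hxy i
    simpa [Matrix.diagonal_pow, Matrix.mulVec_diagonal, Matrix.one_mulVec,
      Finset.sum_apply] using h
  by_contra hne
  have : ∃ k i, x k i ≠ y k i := by
    by_contra hno
    push_neg at hno
    exact hne (funext fun k => funext fun i => hno k i)
  obtain ⟨k0, i, hki⟩ := this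
  set c : Fin (K + 1) → ℝ := fun k => x k i - y k i with hc
  have hcC : c ∈ Cs := by
    constructor
    · intro k
      exact Set.mem_image2_of_mem
        (Set.mem_biUnion (hx k) (Set.mem_range_self i))
        (Set.mem_biUnion (hy k) (Set.mem_range_self i))
    · intro h0
      exact hki (sub_eq_zero.mp (congrFun h0 k0))
  apply ht
  refine Set.mem_biUnion hcC ?_
  show ∑ k : Fin (K + 1), c k * t ^ (k : ℕ) = 0
  have h := hxy' i
  have : ∑ k : Fin (K + 1), c k * t ^ (k : ℕ)
      = (∑ k : Fin (K + 1), t ^ (k : ℕ) * x k i) - ∑ k : Fin (K + 1), t ^ (k : ℕ) * y k i := by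
    rw [← Finset.sum_sub_distrib]
    exact Finset.sum_congr rfl fun k _ => by simp [hc]; ring
  rw [this, h, sub_self]
end
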